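/- Let $K_1 \subseteq \mathbb{R}^m$ and $K_2 \subseteq \mathbb{R}^n$ be compact sets, and let $(H_\varepsilon)_{\varepsilon \in (0,1]}$ be a moderate net of smooth functions on $\mathbb{R}^m \times \mathbb{R}^n$ with $\mathrm{supp}\, H_\varepsilon \subseteq K_1 \times K_2$ for all $\varepsilon$. Suppose that for every moderate net $(f_\varepsilon)$ of smooth functions on $\mathbb{R}^n$, the net of smooth functions $\left( x \mapsto \int_{K_2} H_\varepsilon(x,y) f_\varepsilon(y)\, \mathrm{d}y \right)$ on $\mathbb{R}^m$ is negligible. Then the net $(H_\varepsilon)$ is negligible. -/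

import Mathlib

open MeasureTheory Set Filter

noncomputable def dirDeriv {E : Type*} [NormedAddCommGroup E] [NormedSpace ℝ E]
    (v : E) (f : E → ℂ) : E → ℂ := fun x => fderiv ℝ f x v

noncomputable def itDeriv {E : Type*} [NormedAddCommGroup E] [NormedSpace ℝ E] :
    List E → (E → ℂ) → E → ℂ
  | [] => fun f => f
  | v :: vs => fun f => itDeriv vs (dirDeriv v f)

/-- The standard basis directions of the product space `ℝ^m × ℝ^n`. -/
def prodDirs (m n : ℕ) : Set ((Fin m → ℝ) × (Fin n → ℝ)) :=
  {v | (∃ i, v = (Pi.single i (1:ℝ), 0)) ∨ ∃ j, v = (0, Pi.single j (1:ℝ))}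

/-- The standard basis directions of `ℝ^d`. -/
def stdDirs (d : ℕ) : Set (Fin d → ℝ) := {v | ∃ i, v = Pi.single i (1:ℝ)}

/-- The seminorm `p_{A,l}(f)`: the sup over `x ∈ A` and over all partial derivatives
(iterated directional derivatives along basis directions from `B`) of order `≤ l`. -/
noncomputable def pSemi {E : Type*} [NormedAddCommGroup E] [NormedSpace ℝ E]
    (B A : Set E) (l : ℕ) (f : E → ℂ) : ℝ :=
  sSup {r | ∃ vs : List E, vs.length ≤ l ∧ (∀ v ∈ vs, v ∈ B) ∧ ∃ x ∈ A, r = ‖itDeriv vs f x‖}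

/-- A net `(f_ε)_{ε ∈ (0,1]}` is moderate if every seminorm grows at most
polynomially in `1/ε` as `ε → 0`. -/
def IsModerate {E : Type*} [NormedAddCommGroup E] [NormedSpace ℝ E]
    (B : Set E) (f : ℝ → E → ℂ) : Prop :=
  ∀ A : Set E, IsCompact A → ∀ l : ℕ, ∃ q : ℕ, ∃ C > (0:ℝ), ∃ ε₀ ∈ Ioc (0:ℝ) 1,
    ∀ ε ∈ Ioc (0:ℝ) 1, ε ≤ ε₀ → pSemi B A l (f ε) ≤ C * ε ^ (-(q:ℤ))

/-- A net `(f_ε)_{ε ∈ (0,1]}` is negligible if every seminorm is `O(ε^p)` for all `p`. -/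
def IsNegligible {E : Type*} [NormedAddCommGroup E] [NormedSpace ℝ E]
    (B : Set E) (f : ℝ → E → ℂ) : Prop :=
  ∀ A : Set E, IsCompact A → ∀ l : ℕ, ∀ p : ℕ, ∃ C > (0:ℝ), ∃ ε₀ ∈ Ioc (0:ℝ) 1,
    ∀ ε ∈ Ioc (0:ℝ) 1, ε ≤ ε₀ → pSemi B A l (f ε) ≤ C * ε ^ p


section General
variable {E : Type*} [NormedAddCommGroup E] [NormedSpace ℝ E]

theorem contDiff_dirDeriv {f : E → ℂ} (hf : ContDiff ℝ (⊤:ℕ∞) f) (v : E) :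
    ContDiff ℝ (⊤:ℕ∞) (dirDeriv v f) := by
  have h1 : ContDiff ℝ (⊤:ℕ∞) (fderiv ℝ f) := hf.fderiv_right (by simp)
  exact (ContinuousLinearMap.apply ℝ ℂ v).contDiff.comp h1

theorem contDiff_itDeriv {f : E → ℂ} (vs : List E) (hf : ContDiff ℝ (⊤:ℕ∞) f) :
    ContDiff ℝ (⊤:ℕ∞) (itDeriv vs f) := by
  induction vs generalizing f with
  | nil => exact hf
  | cons v vs ih => exact ih (contDiff_dirDeriv hf v)

theorem itDeriv_append (as bs : List E) (f : E → ℂ) :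
    itDeriv (as ++ bs) f = itDeriv bs (itDeriv as f) := by
  induction as generalizing f with
  | nil => rfl
  | cons a as ih => simpa [itDeriv] using ih (dirDeriv a f)

theorem eventuallyEq_itDeriv {f g : E → ℂ} {x : E} (vs : List E) (h : f =ᶠ[nhds x] g) :
    itDeriv vs f =ᶠ[nhds x] itDeriv vs g := by
  induction vs generalizing f g with
  | nil => exact h
  | cons v vs ih =>
    refine ih ?_
    filter_upwards [Filter.EventuallyEq.fderiv (𝕜 := ℝ) h] with y hy
    simp only [dirDeriv, hy]

theorem itDeriv_zero (vs : List E) (x : E) : itDeriv vs (fun _ => (0:ℂ)) x = 0 := by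
  induction vs generalizing x with
  | nil => rfl
  | cons v vs ih =>
    have : dirDeriv v (fun _ => (0:ℂ)) = fun _ => (0:ℂ) := by
      funext y; simp [dirDeriv, fderiv_const]
    simp only [itDeriv, this]; exact ih x

theorem itDeriv_const_smul {f : E → ℂ} (hf : ContDiff ℝ (⊤:ℕ∞) f) (c : ℝ) (vs : List E) :
    itDeriv vs (fun y => c • f y) = fun x => c • itDeriv vs f x := by
  induction vs generalizing f with
  | nil => rfl
  | cons v vs ih =>
    have h1 : dirDeriv v (fun y => c • f y) = fun y => c • dirDeriv v f y := by
      funext y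
      have hd : DifferentiableAt ℝ f y := (hf.differentiable (by simp)).differentiableAt
      simp only [dirDeriv, fderiv_fun_const_smul hd c]
      simp
    simp only [itDeriv, h1]
    exact ih (contDiff_dirDeriv hf v)

theorem itDeriv_comp_affine {f : E → ℂ} (hf : ContDiff ℝ (⊤:ℕ∞) f) (a : E) (c : ℝ)
    (vs : List E) :
    itDeriv vs (fun y => f (a + c • y)) = fun x => c ^ vs.length • itDeriv vs f (a + c • x) := by
  induction vs generalizing f with
  | nil => simp [itDeriv]
  | cons v vs ih =>
    have hL : ∀ y : E, HasFDerivAt (fun y : E => a + c • y)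
        (c • ContinuousLinearMap.id ℝ E) y := fun y =>
      ((hasFDerivAt_id y).const_smul c).const_add a
    have h1 : dirDeriv v (fun y => f (a + c • y))
        = fun y => c • (fun w => dirDeriv v f (a + c • w)) y := by
      funext y
      have hfd : HasFDerivAt f (fderiv ℝ f (a + c • y)) (a + c • y) :=
        (hf.differentiable (by simp)).differentiableAt.hasFDerivAt
      have hcomp : HasFDerivAt (fun y : E => f (a + c • y))
          ((fderiv ℝ f (a + c • y)).comp (c • ContinuousLinearMap.id ℝ E)) y := hfd.comp y (hL y)
      simp only [dirDeriv, hcomp.fderiv]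
      rw [ContinuousLinearMap.comp_apply]
      have hv : (c • ContinuousLinearMap.id ℝ E) v = c • v := by simp
      rw [hv, (fderiv ℝ f (a + c • y)).map_smul c v]
    have hsm : ContDiff ℝ (⊤:ℕ∞) (fun w : E => dirDeriv v f (a + c • w)) :=
      (contDiff_dirDeriv hf v).comp
        ((contDiff_const.add (contDiff_id.const_smul c)) : ContDiff ℝ (⊤:ℕ∞) fun y : E => a + c • y)
    simp only [itDeriv, h1]
    rw [itDeriv_const_smul (f := fun w => dirDeriv v f (a + c • w)) hsm c vs]
    funext x
    have := congrFun (ih (f := dirDeriv v f) (contDiff_dirDeriv hf v)) x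
    rw [this]
    simp only [List.length_cons]
    rw [smul_smul, ← pow_succ']

end General

section General2
variable {E : Type*} [NormedAddCommGroup E] [NormedSpace ℝ E]

theorem finite_lists {B : Set E} (hB : B.Finite) (l : ℕ) :
    {vs : List E | vs.length ≤ l ∧ ∀ v ∈ vs, v ∈ B}.Finite := by
  have : Finite ↥B := hB.to_subtype
  have h1 : {ls : List ↥B | ls.length ≤ l}.Finite := List.finite_length_le ↥B l
  have h2 : {vs : List E | vs.length ≤ l ∧ ∀ v ∈ vs, v ∈ B}
      ⊆ (fun ls : List ↥B => ls.map Subtype.val) '' {ls : List ↥B | ls.length ≤ l} := by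
    rintro vs ⟨hlen, hmem⟩
    refine ⟨vs.attach.map (fun x => ⟨x.1, hmem x.1 x.2⟩), by simpa using hlen, ?_⟩
    simp [List.map_map, Function.comp]
  exact (h1.image _).subset h2

theorem bddAbove_pSemiSet {B A : Set E} (hB : B.Finite) (hA : IsCompact A)
    {f : E → ℂ} (hf : ContDiff ℝ (⊤:ℕ∞) f) (l : ℕ) :
    BddAbove {r | ∃ vs : List E, vs.length ≤ l ∧ (∀ v ∈ vs, v ∈ B) ∧
      ∃ x ∈ A, r = ‖itDeriv vs f x‖} := by
  have hL := finite_lists hB l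
  have hsub : {r | ∃ vs : List E, vs.length ≤ l ∧ (∀ v ∈ vs, v ∈ B) ∧
      ∃ x ∈ A, r = ‖itDeriv vs f x‖}
      ⊆ ⋃ vs ∈ {vs : List E | vs.length ≤ l ∧ ∀ v ∈ vs, v ∈ B},
        (fun x => ‖itDeriv vs f x‖) '' A := by
    rintro r ⟨vs, h1, h2, x, hx, rfl⟩
    exact mem_biUnion ⟨h1, h2⟩ ⟨x, hx, rfl⟩
  refine BddAbove.mono hsub ?_
  refine (Set.Finite.bddAbove_biUnion hL).2 fun vs _ => ?_
  exact (hA.image ((contDiff_itDeriv vs hf).continuous.norm)).bddAbove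

theorem norm_itDeriv_le_pSemi {B A : Set E} (hB : B.Finite) (hA : IsCompact A)
    {f : E → ℂ} (hf : ContDiff ℝ (⊤:ℕ∞) f) {l : ℕ} {vs : List E} (h1 : vs.length ≤ l)
    (h2 : ∀ v ∈ vs, v ∈ B) {x : E} (hx : x ∈ A) :
    ‖itDeriv vs f x‖ ≤ pSemi B A l f :=
  le_csSup (bddAbove_pSemiSet hB hA hf l) ⟨vs, h1, h2, x, hx, rfl⟩

theorem pSemi_le {B A : Set E} {l : ℕ} {f : E → ℂ} {C : ℝ} (hC : 0 ≤ C)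
    (h : ∀ vs : List E, vs.length ≤ l → (∀ v ∈ vs, v ∈ B) → ∀ x ∈ A,
      ‖itDeriv vs f x‖ ≤ C) : pSemi B A l f ≤ C := by
  refine Real.sSup_le ?_ hC
  rintro r ⟨vs, h1, h2, x, hx, rfl⟩
  exact h vs h1 h2 x hx

theorem opNorm_le_sum_single {k : ℕ} (L : (Fin k → ℝ) →L[ℝ] ℂ) :
    ‖L‖ ≤ ∑ j, ‖L (Pi.single j (1:ℝ))‖ := by
  refine ContinuousLinearMap.opNorm_le_bound _
    (Finset.sum_nonneg fun j _ => norm_nonneg _) fun w => ?_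
  have hw : w = ∑ j, w j • (Pi.single j (1:ℝ) : Fin k → ℝ) := by
    funext j'
    rw [Finset.sum_apply]
    simp [Pi.single_apply]
  calc ‖L w‖ = ‖∑ j, w j • L (Pi.single j (1:ℝ))‖ := by
        conv_lhs => rw [hw]
        rw [map_sum]
        simp_rw [L.map_smul]
      _ ≤ ∑ j, ‖w j • L (Pi.single j (1:ℝ))‖ := norm_sum_le _ _
      _ ≤ ∑ j, ‖L (Pi.single j (1:ℝ))‖ * ‖w‖ := by
        refine Finset.sum_le_sum fun j _ => ?_
        rw [norm_smul]
        rw [mul_comm]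
        exact mul_le_mul_of_nonneg_left (norm_le_pi_norm w j) (norm_nonneg _)
      _ = (∑ j, ‖L (Pi.single j (1:ℝ))‖) * ‖w‖ := by rw [Finset.sum_mul]

theorem taylor_bound {g : E → ℂ} (hg : ContDiff ℝ (⊤:ℕ∞) g) (v z : E) {h M₂ : ℝ}
    (hh : 0 < h)
    (hM : ∀ t ∈ Icc (0:ℝ) h, ‖dirDeriv v (dirDeriv v g) (z + t • v)‖ ≤ M₂) :
    ‖dirDeriv v g z‖ ≤ (‖g (z + h • v)‖ + ‖g z‖) / h + h * M₂ := by
  have hdiff : Differentiable ℝ g := hg.differentiable (by simp)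
  have hdiff1 : Differentiable ℝ (dirDeriv v g) :=
    (contDiff_dirDeriv hg v).differentiable (by simp)
  set D : ℝ → ℂ := fun t => dirDeriv v g (z + t • v) with hD
  have hcurve : ∀ t : ℝ, HasDerivAt (fun s : ℝ => z + s • v) v t := fun t => by
    simpa using (((hasDerivAt_id t).smul_const v).const_add z)
  have hDd : ∀ t : ℝ, HasDerivAt D (dirDeriv v (dirDeriv v g) (z + t • v)) t := fun t => by
    have h1 : HasFDerivAt (dirDeriv v g) (fderiv ℝ (dirDeriv v g) (z + t • v)) (z + t • v) :=
      (hdiff1 _).hasFDerivAt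
    exact h1.comp_hasDerivAt t (hcurve t)
  have hφd : ∀ t : ℝ, HasDerivAt (fun s : ℝ => g (z + s • v)) (D t) t := fun t => by
    have h1 : HasFDerivAt g (fderiv ℝ g (z + t • v)) (z + t • v) := (hdiff _).hasFDerivAt
    exact h1.comp_hasDerivAt t (hcurve t)
  -- inner MVT
  have inner : ∀ t ∈ Icc (0:ℝ) h, ‖D t - D 0‖ ≤ M₂ * t := by
    intro t ht
    have := norm_image_sub_le_of_norm_deriv_le_segment'
      (f := D) (f' := fun t => dirDeriv v (dirDeriv v g) (z + t • v)) (C := M₂)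
      (fun s hs => (hDd s).hasDerivWithinAt) (fun s hs => hM s (Ico_subset_Icc_self hs)) t ht
    rwa [sub_zero] at this
  -- outer MVT
  set ψ : ℝ → ℂ := fun t => g (z + t • v) - t • D 0 with hψ
  have hψd : ∀ t : ℝ, HasDerivAt ψ (D t - D 0) t := fun t => by
    have h2 : HasDerivAt (fun s : ℝ => s • D 0) (D 0) t := by
      simpa using (hasDerivAt_id t).smul_const (D 0)
    exact (hφd t).sub h2
  have outer : ‖ψ h - ψ 0‖ ≤ M₂ * h * h := by
    have := norm_image_sub_le_of_norm_deriv_le_segment'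
      (f := ψ) (f' := fun t => D t - D 0) (C := M₂ * h)
      (fun s hs => (hψd s).hasDerivWithinAt)
      (fun s hs => by
        calc ‖D s - D 0‖ ≤ M₂ * s := inner s (Ico_subset_Icc_self hs)
          _ ≤ M₂ * h := by
            have hM₂ : 0 ≤ M₂ := le_trans (norm_nonneg _) (hM 0 ⟨le_refl _, hh.le⟩)
            exact mul_le_mul_of_nonneg_left (le_of_lt hs.2) hM₂)
      h ⟨hh.le, le_refl _⟩
    rwa [sub_zero] at this
  have hψ0 : ψ 0 = g z := by simp [hψ]
  have hψh : ψ h = g (z + h • v) - h • D 0 := rfl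
  have hD0 : D 0 = dirDeriv v g z := by simp [hD]
  have key : ‖h • D 0‖ ≤ M₂ * h * h + (‖g (z + h • v)‖ + ‖g z‖) := by
    have h1 : h • D 0 = (g (z + h • v) - g z) - (ψ h - ψ 0) := by
      rw [hψh, hψ0]; abel
    rw [h1]
    refine le_trans (norm_sub_le _ _) ?_
    have := norm_sub_le (g (z + h • v)) (g z)
    linarith [outer]
  rw [norm_smul, Real.norm_eq_abs, abs_of_pos hh, hD0] at key
  have step : ‖dirDeriv v g z‖ ≤ (M₂ * h * h + (‖g (z + h • v)‖ + ‖g z‖)) / h := by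
    rw [le_div_iff₀ hh]; linarith
  refine le_trans step (le_of_eq ?_)
  field_simp
  ring
end General2

theorem boot {E : Type*} [NormedAddCommGroup E] [NormedSpace ℝ E] [ProperSpace E]
    (g : ℝ → E → ℂ) (hg : ∀ ε ∈ Ioc (0:ℝ) 1, ContDiff ℝ (⊤:ℕ∞) (g ε))
    (v : E) (hv : ‖v‖ ≤ 1)
    (hmod2 : ∀ A : Set E, IsCompact A → ∃ q : ℕ, ∃ C > (0:ℝ), ∃ ε₁ ∈ Ioc (0:ℝ) 1,
      ∀ ε ∈ Ioc (0:ℝ) 1, ε ≤ ε₁ → ∀ z ∈ A,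
        ‖dirDeriv v (dirDeriv v (g ε)) z‖ ≤ C * ε ^ (-(q:ℤ)))
    (hneg : ∀ A : Set E, IsCompact A → ∀ p : ℕ, ∃ C > (0:ℝ), ∃ ε₁ ∈ Ioc (0:ℝ) 1,
      ∀ ε ∈ Ioc (0:ℝ) 1, ε ≤ ε₁ → ∀ z ∈ A, ‖g ε z‖ ≤ C * ε ^ p) :
    ∀ A : Set E, IsCompact A → ∀ p : ℕ, ∃ C > (0:ℝ), ∃ ε₁ ∈ Ioc (0:ℝ) 1,
      ∀ ε ∈ Ioc (0:ℝ) 1, ε ≤ ε₁ → ∀ z ∈ A, ‖dirDeriv v (g ε) z‖ ≤ C * ε ^ p := by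
  intro A hA p
  have hA' : IsCompact (Metric.cthickening 1 A) := hA.cthickening
  obtain ⟨q, C₁, hC₁, ε₁, hε₁, hb₁⟩ := hmod2 _ hA'
  obtain ⟨C₀, hC₀, ε₂, hε₂, hb₀⟩ := hneg _ hA' (2*p + q + 1)
  refine ⟨2*C₀ + C₁, by positivity, min ε₁ ε₂,
    ⟨lt_min hε₁.1 hε₂.1, le_trans (min_le_left _ _) hε₁.2⟩, ?_⟩
  intro ε hε hle z hz
  have hεpos := hε.1
  have hε1 := hε.2
  set h : ℝ := ε ^ (p + q + 1) with hh
  have hhpos : 0 < h := pow_pos hεpos _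
  have hh1 : h ≤ 1 := pow_le_one₀ hεpos.le hε1
  have hmem : ∀ t ∈ Icc (0:ℝ) h, z + t • v ∈ Metric.cthickening 1 A := by
    intro t ht
    refine Metric.mem_cthickening_of_dist_le _ z 1 _ hz ?_
    rw [dist_eq_norm, add_sub_cancel_left, norm_smul]
    calc ‖t‖ * ‖v‖ ≤ h * 1 := by
          refine mul_le_mul ?_ hv (norm_nonneg _) hhpos.le
          rw [Real.norm_eq_abs, abs_of_nonneg ht.1]; exact ht.2
      _ ≤ 1 := by rw [mul_one]; exact hh1
  have hM : ∀ t ∈ Icc (0:ℝ) h, ‖dirDeriv v (dirDeriv v (g ε)) (z + t • v)‖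
      ≤ C₁ * ε ^ (-(q:ℤ)) := fun t ht =>
    hb₁ ε hε (le_trans hle (min_le_left _ _)) _ (hmem t ht)
  have htay := taylor_bound (hg ε hε) v z hhpos hM
  have hz' : z ∈ Metric.cthickening 1 A := Metric.self_subset_cthickening _ hz
  have hzh : z + h • v ∈ Metric.cthickening 1 A := hmem h ⟨hhpos.le, le_rfl⟩
  have hgz := hb₀ ε hε (le_trans hle (min_le_right _ _)) z hz'
  have hgzh := hb₀ ε hε (le_trans hle (min_le_right _ _)) _ hzh
  have e1 : (2*(C₀ * ε^(2*p+q+1)))/h = 2*C₀*ε^p := by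
    rw [hh, show 2*p+q+1 = p + (p+q+1) by ring, pow_add]
    field_simp
  have e2 : h * (C₁ * ε^(-(q:ℤ))) = C₁ * ε^(p+1) := by
    have hεne : ε ≠ 0 := hεpos.ne'
    rw [hh, zpow_neg, zpow_natCast, show p+q+1 = (p+1) + q by ring, pow_add]
    field_simp
  have e3 : C₁ * ε^(p+1) ≤ C₁ * ε^p :=
    mul_le_mul_of_nonneg_left (pow_le_pow_of_le_one hεpos.le hε1 (Nat.le_succ p)) hC₁.le
  calc ‖dirDeriv v (g ε) z‖
      ≤ (‖g ε (z + h • v)‖ + ‖g ε z‖)/h + h * (C₁ * ε^(-(q:ℤ))) := htay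
    _ ≤ (2*(C₀ * ε^(2*p+q+1)))/h + h * (C₁ * ε^(-(q:ℤ))) := by
        gcongr
        linarith
    _ = 2*C₀*ε^p + C₁ * ε^(p+1) := by rw [e1, e2]
    _ ≤ 2*C₀*ε^p + C₁ * ε^p := by linarith
    _ = (2*C₀ + C₁) * ε^p := by ring

theorem finite_stdDirs (d : ℕ) : (stdDirs d).Finite := by
  have : stdDirs d = Set.range (fun i : Fin d => (Pi.single i (1:ℝ) : Fin d → ℝ)) := by
    ext v; simp [stdDirs, Set.mem_range, eq_comm]
  rw [this]; exact Set.finite_range _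

theorem finite_prodDirs (m n : ℕ) : (prodDirs m n).Finite := by
  have : prodDirs m n =
      Set.range (fun i : Fin m => ((Pi.single i (1:ℝ) : Fin m → ℝ), (0 : Fin n → ℝ)))
      ∪ Set.range (fun j : Fin n => ((0 : Fin m → ℝ), (Pi.single j (1:ℝ) : Fin n → ℝ))) := by
    ext v; simp [prodDirs, Set.mem_range, eq_comm]
  rw [this]; exact (Set.finite_range _).union (Set.finite_range _)

theorem int_scaled {n : ℕ} {F : Type*} [NormedAddCommGroup F] [NormedSpace ℝ F]
    (G : (Fin n → ℝ) → F) {θ : ℝ} (hθ : 0 < θ) (y₀ : Fin n → ℝ) :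
    ∫ y, ((θ^n)⁻¹ : ℝ) • G (θ⁻¹ • (y₀ - y)) = ∫ y, G y := by
  rw [integral_smul]
  have h1 : ∫ y, G (θ⁻¹ • (y₀ - y)) = ∫ y, G (θ⁻¹ • y) :=
    integral_sub_left_eq_self (fun w => G (θ⁻¹ • w)) volume y₀
  rw [h1, Measure.integral_comp_smul volume G θ⁻¹, Module.finrank_fin_fun, inv_pow, inv_inv,
    abs_of_pos (pow_pos hθ n), smul_smul, inv_mul_cancel₀ (pow_pos hθ n).ne', one_smul]

theorem exists_global_bound {E : Type*} [NormedAddCommGroup E] [NormedSpace ℝ E]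
    {Ψ : E → ℂ} (hΨ : ContDiff ℝ (⊤:ℕ∞) Ψ) {s : Set E} (hs : IsCompact s) (hcl : IsClosed s)
    (hzero : ∀ x ∉ s, Ψ x = 0) (vs : List E) :
    ∃ M, 0 ≤ M ∧ ∀ x, ‖itDeriv vs Ψ x‖ ≤ M := by
  obtain ⟨M, hM⟩ := hs.exists_bound_of_continuousOn
    (contDiff_itDeriv vs hΨ).continuous.continuousOn
  refine ⟨max M 0, le_max_right _ _, fun x => ?_⟩
  by_cases hx : x ∈ s
  · exact le_trans (hM x hx) (le_max_left _ _)
  · have hev : Ψ =ᶠ[nhds x] (fun _ => (0:ℂ)) :=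
      eventually_of_mem (hcl.isOpen_compl.mem_nhds hx) (fun y hy => hzero y hy)
    have := (eventuallyEq_itDeriv vs hev).self_of_nhds
    rw [this, itDeriv_zero]
    simp

theorem exists_bump (n : ℕ) : ∃ φ : (Fin n → ℝ) → ℝ, ContDiff ℝ (⊤:ℕ∞) φ ∧
    (∀ y, 0 ≤ φ y) ∧ (∀ w ∉ Metric.closedBall (0:Fin n → ℝ) 1, φ w = 0) ∧
    (∫ y, φ y) = 1 := by
  set ψ : ContDiffBump (0 : Fin n → ℝ) := ⟨1/2, 1, by norm_num, by norm_num⟩ with hψdef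
  refine ⟨ψ.normed volume, ψ.contDiff_normed, ψ.nonneg_normed, ?_, ψ.integral_normed⟩
  intro w hw
  by_contra hne
  have h2 : w ∈ Metric.ball (0 : Fin n → ℝ) ψ.rOut := by
    rw [← ψ.support_normed_eq (μ := volume)]
    exact Function.mem_support.2 hne
  exact hw (Metric.ball_subset_closedBall h2)

noncomputable def testF (n r : ℕ) (Ψ : (Fin n → ℝ) → ℂ) (c : ℝ → (Fin n → ℝ)) :
    ℝ → (Fin n → ℝ) → ℂ :=
  fun ε y => ((ε^r)^n)⁻¹ • Ψ ((ε^r)⁻¹ • c ε + (-(ε^r)⁻¹) • y)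

theorem testF_eq (n r : ℕ) (Ψ : (Fin n → ℝ) → ℂ) (c : ℝ → (Fin n → ℝ)) (ε : ℝ)
    (y : Fin n → ℝ) :
    testF n r Ψ c ε y = ((ε^r)^n)⁻¹ • Ψ ((ε^r)⁻¹ • (c ε - y)) := by
  simp [testF, smul_sub, sub_eq_add_neg, neg_smul]

theorem testF_smooth {n : ℕ} {Ψ : (Fin n → ℝ) → ℂ} (hΨ : ContDiff ℝ (⊤:ℕ∞) Ψ)
    (r : ℕ) (c : ℝ → (Fin n → ℝ)) (ε : ℝ) : ContDiff ℝ (⊤:ℕ∞) (testF n r Ψ c ε) :=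
  (hΨ.comp (contDiff_const.add (contDiff_id.const_smul _))).const_smul _

theorem testF_moderate {n : ℕ} {Ψ : (Fin n → ℝ) → ℂ} (hΨ : ContDiff ℝ (⊤:ℕ∞) Ψ)
    (hΨzero : ∀ w ∉ Metric.closedBall (0:Fin n → ℝ) 1, Ψ w = 0)
    (r : ℕ) (c : ℝ → (Fin n → ℝ)) : IsModerate (stdDirs n) (testF n r Ψ c) := by
  classical
  intro A₂ hA₂ l
  have hfin := finite_lists (E := Fin n → ℝ) (finite_stdDirs n) l
  have hMf : ∀ vs : List (Fin n → ℝ), ∃ M, 0 ≤ M ∧ ∀ x, ‖itDeriv vs Ψ x‖ ≤ M :=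
    fun vs => exists_global_bound hΨ (isCompact_closedBall _ _)
      Metric.isClosed_closedBall hΨzero vs
  choose Mf hMf0 hMfb using hMf
  set T := hfin.toFinset with hTdef
  set M : ℝ := ∑ vs ∈ T, Mf vs with hMdef
  have hM0 : 0 ≤ M := Finset.sum_nonneg fun vs _ => hMf0 vs
  have hMle : ∀ vs ∈ T, Mf vs ≤ M := fun vs hvs =>
    Finset.single_le_sum (fun v _ => hMf0 v) hvs
  refine ⟨r*(n+l), M+1, by positivity, 1, ⟨one_pos, le_rfl⟩, fun ε hε _ => ?_⟩
  have hεpos := hε.1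
  have hθpos : 0 < ε^r := pow_pos hεpos _
  refine pSemi_le (by positivity) ?_
  intro vs hlen hstd y hy
  have hvsT : vs ∈ T := by
    rw [hTdef, Set.Finite.mem_toFinset]
    exact ⟨hlen, hstd⟩
  have haff : ContDiff ℝ (⊤:ℕ∞) (fun w : Fin n → ℝ => Ψ ((ε^r)⁻¹ • c ε + (-(ε^r)⁻¹) • w)) :=
    hΨ.comp (contDiff_const.add (contDiff_id.const_smul _))
  have e1 : itDeriv vs (testF n r Ψ c ε) y
      = ((ε^r)^n)⁻¹ • ((-(ε^r)⁻¹) ^ vs.length •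
          itDeriv vs Ψ ((ε^r)⁻¹ • c ε + (-(ε^r)⁻¹) • y)) := by
    show itDeriv vs (fun w => ((ε^r)^n)⁻¹ • Ψ ((ε^r)⁻¹ • c ε + (-(ε^r)⁻¹) • w)) y = _
    rw [congrFun (itDeriv_const_smul haff (((ε^r)^n)⁻¹) vs) y]
    rw [congrFun (itDeriv_comp_affine hΨ ((ε^r)⁻¹ • c ε) (-(ε^r)⁻¹) vs) y]
  rw [e1]
  rw [norm_smul, norm_smul, Real.norm_eq_abs, Real.norm_eq_abs,
    abs_of_pos (by positivity : (0:ℝ) < ((ε^r)^n)⁻¹), abs_pow, abs_neg,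
    abs_of_pos (by positivity : (0:ℝ) < (ε^r)⁻¹)]
  have hstep : ((ε^r)^n)⁻¹ * (((ε^r)⁻¹)^vs.length * ‖itDeriv vs Ψ
        ((ε^r)⁻¹ • c ε + (-(ε^r)⁻¹) • y)‖)
      ≤ ((ε^r)^n)⁻¹ * (((ε^r)⁻¹)^vs.length * Mf vs) := by
    have := hMfb vs ((ε^r)⁻¹ • c ε + (-(ε^r)⁻¹) • y)
    gcongr
  refine le_trans hstep ?_
  have e2 : ((ε^r)^n)⁻¹ * (((ε^r)⁻¹)^vs.length * Mf vs)
      = (ε^(r*n + r*vs.length))⁻¹ * Mf vs := by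
    rw [inv_pow, ← pow_mul, ← pow_mul, pow_add, mul_inv]
    ring
  rw [e2]
  have hexp : ε^(r*(n+l)) ≤ ε^(r*n + r*vs.length) := by
    apply pow_le_pow_of_le_one hεpos.le hε.2
    have h1 : r * vs.length ≤ r * l := Nat.mul_le_mul_left r hlen
    have h2 : r*(n+l) = r*n + r*l := Nat.mul_add r n l
    omega
  have hinv : (ε^(r*n + r*vs.length))⁻¹ ≤ (ε^(r*(n+l)))⁻¹ :=
    inv_anti₀ (pow_pos hεpos _) hexp
  calc (ε^(r*n + r*vs.length))⁻¹ * Mf vs ≤ (ε^(r*(n+l)))⁻¹ * (M+1) := by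
        apply mul_le_mul hinv (le_trans (hMle vs hvsT) (by linarith)) (hMf0 vs)
        positivity
    _ = (M+1) * ε ^ (-((r*(n+l) : ℕ) : ℤ)) := by
        rw [zpow_neg, zpow_natCast]
        ring

theorem step1 {m n : ℕ} (S₁ : Set (Fin m → ℝ)) (S₂ : Set (Fin n → ℝ))
    (hS₁ : IsCompact S₁) (hS₂ : IsCompact S₂)
    (H : ℝ → (Fin m → ℝ) × (Fin n → ℝ) → ℂ)
    (hsm : ∀ ε ∈ Ioc (0:ℝ) 1, ContDiff ℝ (⊤:ℕ∞) (H ε))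
    (hsupp : ∀ ε ∈ Ioc (0:ℝ) 1, Function.support (H ε) ⊆ S₁ ×ˢ S₂)
    (hmod : IsModerate (prodDirs m n) H)
    (hvanish : ∀ f : ℝ → (Fin n → ℝ) → ℂ,
      (∀ ε ∈ Ioc (0:ℝ) 1, ContDiff ℝ (⊤:ℕ∞) (f ε)) →
      IsModerate (stdDirs n) f →
      IsNegligible (stdDirs m) (fun ε x => ∫ y in S₂, H ε (x, y) * f ε y)) :
    ∀ p : ℕ, ∃ C > (0:ℝ), ∃ ε₁ ∈ Ioc (0:ℝ) 1, ∀ ε ∈ Ioc (0:ℝ) 1, ε ≤ ε₁ →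
      ∀ z, ‖H ε z‖ ≤ C * ε ^ p := by
  classical
  intro p
  set K : Set ((Fin m → ℝ) × (Fin n → ℝ)) := S₁ ×ˢ S₂ with hKdef
  have hKc : IsCompact K := hS₁.prod hS₂
  by_cases hKne : K.Nonempty
  swap
  · refine ⟨1, one_pos, 1, ⟨one_pos, le_rfl⟩, fun ε hε _ z => ?_⟩
    have hz0 : H ε z = 0 := by
      by_contra hne
      exact hKne ⟨z, hsupp ε hε (Function.mem_support.2 hne)⟩
    rw [hz0, norm_zero, one_mul]
    exact pow_nonneg hε.1.le p
  have hK'c : IsCompact (Metric.cthickening 1 K) := hKc.cthickening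
  obtain ⟨q, C₁, hC₁, εa, hεa, hmod1⟩ := hmod (Metric.cthickening 1 K) hK'c 1
  -- maximizer selection
  have hsel : ∀ ε : ℝ, ∃ z, ε ∈ Ioc (0:ℝ) 1 → z ∈ K ∧ ∀ w ∈ K, ‖H ε w‖ ≤ ‖H ε z‖ := by
    intro ε
    by_cases hε : ε ∈ Ioc (0:ℝ) 1
    · obtain ⟨z, hzK, hzmax⟩ := hKc.exists_isMaxOn hKne
        ((hsm ε hε).continuous.norm).continuousOn
      exact ⟨z, fun _ => ⟨hzK, fun w hw => hzmax hw⟩⟩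
    · exact ⟨hKne.choose, fun h => absurd h hε⟩
  choose Z hZ using hsel
  -- bump function
  obtain ⟨φ, hφsm, hφ0, hφz, hφint⟩ := exists_bump n
  set Ψ : (Fin n → ℝ) → ℂ := fun y => ((φ y : ℝ) : ℂ) with hΨdef
  have hΨsm : ContDiff ℝ (⊤:ℕ∞) Ψ := Complex.ofRealCLM.contDiff.comp hφsm
  have hΨzero : ∀ w ∉ Metric.closedBall (0 : Fin n → ℝ) 1, Ψ w = 0 := by
    intro w hw
    simp [hΨdef, hφz w hw]
  have hΨnorm : ∀ w, ‖Ψ w‖ = φ w := by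
    intro w
    rw [hΨdef]
    rw [Complex.norm_real, Real.norm_eq_abs, abs_of_nonneg (hφ0 w)]
  set r : ℕ := p + q with hrdef
  set f : ℝ → (Fin n → ℝ) → ℂ := testF n r Ψ (fun ε => (Z ε).2) with hfdef
  have hfsm : ∀ ε ∈ Ioc (0:ℝ) 1, ContDiff ℝ (⊤:ℕ∞) (f ε) := fun ε _ =>
    testF_smooth hΨsm r _ ε
  have hfmod : IsModerate (stdDirs n) f := testF_moderate hΨsm hΨzero r _
  -- apply hvanish
  have hneg := hvanish f hfsm hfmod
  have hA₁ : IsCompact (Prod.fst '' K) := hKc.image continuous_fst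
  obtain ⟨C₂, hC₂, εb, hεb, hgneg⟩ := hneg (Prod.fst '' K) hA₁ 0 p
  refine ⟨C₂ + n*C₁ + 1, by positivity, min εa εb,
    ⟨lt_min hεa.1 hεb.1, le_trans (min_le_left _ _) hεa.2⟩, ?_⟩
  intro ε hε hle z
  by_cases hzero : H ε z = 0
  · rw [hzero, norm_zero]
    have : (0:ℝ) < (C₂ + n*C₁ + 1) * ε ^ p := by
      have h0 := hε.1
      positivity
    exact this.le
  have hzK : z ∈ K := hsupp ε hε (Function.mem_support.2 hzero)
  obtain ⟨hZK, hZmax⟩ := hZ ε hε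
  have hεpos := hε.1
  have hθpos : 0 < ε^r := pow_pos hεpos _
  have hθ1 : ε^r ≤ 1 := pow_le_one₀ hεpos.le hε.2
  have hsmH := hsm ε hε
  set x₀ := (Z ε).1 with hx₀
  set y₀ := (Z ε).2 with hy₀
  have hZeq : Z ε = (x₀, y₀) := rfl
  set L : ℝ := (n:ℝ) * (C₁ * ε^(-(q:ℤ))) with hLdef
  have hLpos : 0 ≤ L := by
    rw [hLdef, zpow_neg, zpow_natCast]
    positivity
  -- derivative bound for the partial map
  have hpart : ContDiff ℝ (⊤:ℕ∞) (fun y => H ε (x₀, y)) :=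
    hsmH.comp (contDiff_const.prodMk contDiff_id)
  have hLbound : ∀ w ∈ Metric.closedBall y₀ (ε^r),
      ‖fderiv ℝ (fun y => H ε (x₀, y)) w‖ ≤ L := by
    intro w hw
    have hpd : HasFDerivAt (fun y => H ε (x₀, y))
        ((fderiv ℝ (H ε) (x₀, w)).comp
          (((0 : (Fin n → ℝ) →L[ℝ] (Fin m → ℝ))).prod (ContinuousLinearMap.id ℝ _))) w := by
      refine HasFDerivAt.comp w ((hsmH.differentiable (by simp) _).hasFDerivAt) ?_
      exact HasFDerivAt.prodMk (hasFDerivAt_const x₀ w) (hasFDerivAt_id w)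
    rw [hpd.fderiv]
    refine le_trans (opNorm_le_sum_single _) ?_
    have hterm : ∀ j : Fin n,
        ‖((fderiv ℝ (H ε) (x₀, w)).comp
          (((0 : (Fin n → ℝ) →L[ℝ] (Fin m → ℝ))).prod (ContinuousLinearMap.id ℝ _)))
          (Pi.single j (1:ℝ))‖ ≤ C₁ * ε^(-(q:ℤ)) := by
      intro j
      have happ : ((fderiv ℝ (H ε) (x₀, w)).comp
          (((0 : (Fin n → ℝ) →L[ℝ] (Fin m → ℝ))).prod (ContinuousLinearMap.id ℝ _)))
          (Pi.single j (1:ℝ))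
          = itDeriv [((0 : Fin m → ℝ), (Pi.single j (1:ℝ) : Fin n → ℝ))] (H ε) (x₀, w) := by
        simp only [ContinuousLinearMap.coe_comp', Function.comp_apply,
          ContinuousLinearMap.prod_apply, ContinuousLinearMap.zero_apply,
          ContinuousLinearMap.coe_id', id_eq]
        rfl
      rw [happ]
      have hmem : ((x₀ : Fin m → ℝ), w) ∈ Metric.cthickening 1 K := by
        refine Metric.mem_cthickening_of_dist_le _ (x₀, y₀) 1 _ (hZeq ▸ hZK) ?_
        rw [Prod.dist_eq]
        simp only [dist_self]
        refine max_le (by norm_num) ?_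
        exact le_trans (Metric.mem_closedBall.1 hw) hθ1
      refine le_trans (norm_itDeriv_le_pSemi (finite_prodDirs m n) hK'c hsmH
        (by simp) ?_ hmem) (hmod1 ε hε (le_trans hle (min_le_left _ _)))
      rintro v hv
      rw [List.mem_singleton] at hv
      exact Or.inr ⟨j, hv⟩
    refine le_trans (Finset.sum_le_sum (fun j _ => hterm j)) ?_
    rw [Finset.sum_const, Finset.card_univ, Fintype.card_fin, nsmul_eq_mul, hLdef]
  -- MVT estimate
  have hMVT : ∀ y' ∈ Metric.closedBall y₀ (ε^r),
      ‖H ε (x₀, y') - H ε (x₀, y₀)‖ ≤ L * ε^r := by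
    intro y' hy'
    have h1 := (convex_closedBall y₀ (ε^r)).norm_image_sub_le_of_norm_fderiv_le
      (f := fun y => H ε (x₀, y))
      (fun w _ => (hpart.differentiable (by simp)).differentiableAt)
      hLbound (Metric.mem_closedBall_self hθpos.le) hy'
    refine le_trans h1 ?_
    refine mul_le_mul_of_nonneg_left ?_ hLpos
    rw [← dist_eq_norm]
    exact Metric.mem_closedBall.1 hy'
  -- support of f ε
  have hsuppf : ∀ y, f ε y ≠ 0 → y ∈ Metric.closedBall y₀ (ε^r) := by
    intro y hfy
    by_contra hy
    apply hfy
    rw [hfdef, testF_eq]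
    suffices h : Ψ ((ε^r)⁻¹ • (y₀ - y)) = 0 by rw [h, smul_zero]
    refine hΨzero _ ?_
    intro hin
    apply hy
    have h2 := Metric.mem_closedBall.1 hin
    rw [dist_zero_right, norm_smul, Real.norm_eq_abs,
      abs_of_pos (by positivity : (0:ℝ) < (ε^r)⁻¹)] at h2
    rw [Metric.mem_closedBall, dist_eq_norm, norm_sub_rev]
    calc ‖y₀ - y‖ = (ε^r) * ((ε^r)⁻¹ * ‖y₀ - y‖) := by field_simp
      _ ≤ (ε^r) * 1 := mul_le_mul_of_nonneg_left h2 hθpos.le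
      _ = ε^r := mul_one _
  have hfcont : Continuous (f ε) := (hfsm ε hε).continuous
  have hfsupp : HasCompactSupport (f ε) :=
    HasCompactSupport.intro (isCompact_closedBall y₀ (ε^r))
      (fun y hy => by_contra fun hne => hy (hsuppf y hne))
  have hint_f : Integrable (f ε) := hfcont.integrable_of_hasCompactSupport hfsupp
  have hHcont : Continuous (fun y => H ε (x₀, y)) := hpart.continuous
  have hint1' : Integrable (fun y => H ε (x₀,y) * f ε y) :=
    (hHcont.mul hfcont).integrable_of_hasCompactSupport (hfsupp.mul_left)
  have hint2' : Integrable (fun y => H ε (x₀,y₀) * f ε y) := hint_f.const_mul _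
  -- integral of f is 1
  have hint1 : ∫ y, f ε y = 1 := by
    have h1 : ∀ y, f ε y = ((ε^r)^n)⁻¹ • Ψ ((ε^r)⁻¹ • (y₀ - y)) := fun y => by
      rw [hfdef, testF_eq]
    calc ∫ y, f ε y = ∫ y, ((ε^r)^n)⁻¹ • Ψ ((ε^r)⁻¹ • (y₀ - y)) := by simp_rw [h1]
      _ = ∫ y, Ψ y := int_scaled Ψ hθpos y₀
      _ = ((∫ y, φ y : ℝ) : ℂ) := integral_ofReal
      _ = 1 := by rw [hφint, Complex.ofReal_one]
  have hintnorm : ∫ y, ‖f ε y‖ = 1 := by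
    have h1 : ∀ y, ‖f ε y‖ = ((ε^r)^n)⁻¹ • φ ((ε^r)⁻¹ • (y₀ - y)) := fun y => by
      rw [hfdef, testF_eq, norm_smul, Real.norm_eq_abs,
        abs_of_pos (by positivity : (0:ℝ) < ((ε^r)^n)⁻¹), hΨnorm, smul_eq_mul]
    calc ∫ y, ‖f ε y‖ = ∫ y, ((ε^r)^n)⁻¹ • φ ((ε^r)⁻¹ • (y₀ - y)) := by simp_rw [h1]
      _ = ∫ y, φ y := int_scaled φ hθpos y₀
      _ = 1 := hφint
  -- extension of the set integral
  have hext : (∫ y in S₂, H ε (x₀,y) * f ε y) = ∫ y, H ε (x₀,y) * f ε y := by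
    refine setIntegral_eq_integral_of_forall_compl_eq_zero ?_
    intro y hy
    have hH0 : H ε (x₀, y) = 0 := by
      by_contra hne
      exact hy (hsupp ε hε (Function.mem_support.2 hne)).2
    rw [hH0, zero_mul]
  -- the key mollifier estimate
  have hkey : ‖H ε (x₀,y₀) - ∫ y, H ε (x₀,y) * f ε y‖ ≤ L * ε^r := by
    have hrepr : H ε (x₀,y₀) = ∫ y, H ε (x₀,y₀) * f ε y := by
      rw [integral_const_mul, hint1, mul_one]
    rw [hrepr, ← integral_sub hint2' hint1']
    refine le_trans (norm_integral_le_integral_norm _) ?_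
    have hpt : ∀ y, ‖H ε (x₀,y₀) * f ε y - H ε (x₀,y) * f ε y‖ ≤ (L * ε^r) * ‖f ε y‖ := by
      intro y
      rw [← sub_mul, norm_mul]
      by_cases hfy : f ε y = 0
      · rw [hfy, norm_zero, mul_zero, mul_zero]
      · refine mul_le_mul_of_nonneg_right ?_ (norm_nonneg _)
        have := hMVT y (hsuppf y hfy)
        rwa [norm_sub_rev] at this
    calc ∫ y, ‖H ε (x₀,y₀) * f ε y - H ε (x₀,y) * f ε y‖
        ≤ ∫ y, (L * ε^r) * ‖f ε y‖ :=
          integral_mono (hint2'.sub hint1').norm ((hint_f.norm).const_mul _) hpt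
      _ = (L * ε^r) * ∫ y, ‖f ε y‖ := integral_const_mul _ _
      _ = L * ε^r := by rw [hintnorm, mul_one]
  -- bound the negligible part
  have hgle : ‖∫ y in S₂, H ε (x₀,y) * f ε y‖ ≤ C₂ * ε^p := by
    obtain ⟨B₁, hB₁⟩ := (hA₁.prod hS₂).exists_bound_of_continuousOn
      (hsmH.continuous.continuousOn)
    obtain ⟨B₂, hB₂0, hB₂⟩ : ∃ B₂, 0 ≤ B₂ ∧ ∀ y, ‖f ε y‖ ≤ B₂ := by
      obtain ⟨B₂, hB₂⟩ := (isCompact_closedBall y₀ (ε^r)).exists_bound_of_continuousOn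
        hfcont.continuousOn
      refine ⟨max B₂ 0, le_max_right _ _, fun y => ?_⟩
      by_cases hfy : f ε y = 0
      · rw [hfy, norm_zero]; exact le_max_right _ _
      · exact le_trans (hB₂ y (hsuppf y hfy)) (le_max_left _ _)
    have hBB : ∀ x ∈ Prod.fst '' K,
        ‖∫ y in S₂, H ε (x,y) * f ε y‖ ≤ (max B₁ 0 * B₂) * (volume S₂).toReal := by
      intro x hx
      refine norm_setIntegral_le_of_norm_le_const hS₂.measure_lt_top
        ?_
      intro y hy
      rw [norm_mul]
      refine mul_le_mul (le_trans (hB₁ (x,y) (Set.mk_mem_prod hx hy)) (le_max_left _ _))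
        (hB₂ y) (norm_nonneg _) (le_max_right _ _)
    have hbdd : BddAbove {ρ : ℝ | ∃ vs : List (Fin m → ℝ), vs.length ≤ 0 ∧
        (∀ v ∈ vs, v ∈ stdDirs m) ∧ ∃ x ∈ Prod.fst '' K,
        ρ = ‖itDeriv vs (fun x => ∫ y in S₂, H ε (x,y) * f ε y) x‖} := by
      refine ⟨(max B₁ 0 * B₂) * (volume S₂).toReal, ?_⟩
      rintro ρ ⟨vs, hlen, _, x, hx, rfl⟩
      rw [Nat.le_zero, List.length_eq_zero_iff] at hlen
      subst hlen
      exact hBB x hx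
    have hel : ‖∫ y in S₂, H ε (x₀,y) * f ε y‖
        ≤ pSemi (stdDirs m) (Prod.fst '' K) 0 (fun x => ∫ y in S₂, H ε (x,y) * f ε y) :=
      le_csSup hbdd ⟨[], le_rfl, by simp, x₀, ⟨Z ε, hZK, rfl⟩, rfl⟩
    exact le_trans hel (hgneg ε hε (le_trans hle (min_le_right _ _)))
  -- final computation
  have harith : L * ε^r = (n:ℝ) * C₁ * ε^p := by
    rw [hLdef, hrdef, zpow_neg, zpow_natCast, pow_add]
    field_simp
  calc ‖H ε z‖ ≤ ‖H ε (Z ε)‖ := hZmax z hzK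
    _ = ‖H ε (x₀,y₀)‖ := by rw [hZeq]
    _ ≤ ‖∫ y, H ε (x₀,y) * f ε y‖ + ‖H ε (x₀,y₀) - ∫ y, H ε (x₀,y) * f ε y‖ :=
        norm_le_insert' _ _
    _ ≤ C₂ * ε^p + L * ε^r := by
        rw [hext] at hgle
        exact add_le_add hgle hkey
    _ = C₂ * ε^p + (n:ℝ) * C₁ * ε^p := by rw [harith]
    _ ≤ (C₂ + n*C₁ + 1) * ε^p := by
        have h0 : (0:ℝ) ≤ ε^p := pow_nonneg hεpos.le p
        nlinarith

theorem norm_prodDirs_le {m n : ℕ} {v : (Fin m → ℝ) × (Fin n → ℝ)}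
    (hv : v ∈ prodDirs m n) : ‖v‖ ≤ 1 := by
  rcases hv with ⟨i, rfl⟩ | ⟨j, rfl⟩ <;>
  · rw [Prod.norm_def]
    simp [Pi.norm_single]

/-- Characterization of generalized integral operators by their kernel, at the level of
representatives: if a moderate net of smooth compactly supported kernels gives a
negligible net `(x ↦ ∫ H_ε(x,y) f_ε(y) dy)` for every moderate net `(f_ε)` of smooth
functions, then the net of kernels is itself negligible. -/
theorem kernel_characterization
    {m n : ℕ} (S₁ : Set (Fin m → ℝ)) (S₂ : Set (Fin n → ℝ))
    (hS₁ : IsCompact S₁) (hS₂ : IsCompact S₂)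
    (H : ℝ → (Fin m → ℝ) × (Fin n → ℝ) → ℂ)
    (hsm : ∀ ε ∈ Ioc (0:ℝ) 1, ContDiff ℝ (⊤:ℕ∞) (H ε))
    (hsupp : ∀ ε ∈ Ioc (0:ℝ) 1, Function.support (H ε) ⊆ S₁ ×ˢ S₂)
    (hmod : IsModerate (prodDirs m n) H)
    (hvanish : ∀ f : ℝ → (Fin n → ℝ) → ℂ,
      (∀ ε ∈ Ioc (0:ℝ) 1, ContDiff ℝ (⊤:ℕ∞) (f ε)) →
      IsModerate (stdDirs n) f →
      IsNegligible (stdDirs m) (fun ε x => ∫ y in S₂, H ε (x, y) * f ε y)) :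
    IsNegligible (prodDirs m n) H := by
  classical
  have hneg0 : ∀ vs : List ((Fin m → ℝ) × (Fin n → ℝ)), (∀ w ∈ vs, w ∈ prodDirs m n) →
      ∀ A : Set ((Fin m → ℝ) × (Fin n → ℝ)), IsCompact A → ∀ p : ℕ,
      ∃ C > (0:ℝ), ∃ ε₁ ∈ Ioc (0:ℝ) 1, ∀ ε ∈ Ioc (0:ℝ) 1, ε ≤ ε₁ →
        ∀ z ∈ A, ‖itDeriv vs (H ε) z‖ ≤ C * ε ^ p := by
    intro vs
    induction vs using List.reverseRecOn with
    | nil =>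
      intro _ A hA p
      obtain ⟨C, hC, ε₁, hε₁, hb⟩ := step1 S₁ S₂ hS₁ hS₂ H hsm hsupp hmod hvanish p
      exact ⟨C, hC, ε₁, hε₁, fun ε hε hle z _ => hb ε hε hle z⟩
    | append_singleton vs v ih =>
      intro hmem
      have hmemvs : ∀ w ∈ vs, w ∈ prodDirs m n := fun w hw =>
        hmem w (List.mem_append_left _ hw)
      have hv : v ∈ prodDirs m n :=
        hmem v (List.mem_append_right _ (List.mem_singleton_self v))
      have hvnorm : ‖v‖ ≤ 1 := norm_prodDirs_le hv
      have hmod2 : ∀ A : Set ((Fin m → ℝ) × (Fin n → ℝ)), IsCompact A →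
          ∃ q : ℕ, ∃ C > (0:ℝ), ∃ ε₁ ∈ Ioc (0:ℝ) 1, ∀ ε ∈ Ioc (0:ℝ) 1, ε ≤ ε₁ →
            ∀ z ∈ A, ‖dirDeriv v (dirDeriv v (itDeriv vs (H ε))) z‖ ≤ C * ε ^ (-(q:ℤ)) := by
        intro A hA
        obtain ⟨q, C, hC, ε₁, hε₁, hmodb⟩ := hmod A hA (vs.length + 2)
        refine ⟨q, C, hC, ε₁, hε₁, fun ε hε hle z hz => ?_⟩
        have he2 : dirDeriv v (dirDeriv v (itDeriv vs (H ε))) z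
            = itDeriv (vs ++ [v, v]) (H ε) z := by
          rw [itDeriv_append]
          rfl
        rw [he2]
        refine le_trans (norm_itDeriv_le_pSemi (finite_prodDirs m n) hA (hsm ε hε)
          (by simp) ?_ hz) (hmodb ε hε hle)
        intro w hw
        rcases List.mem_append.1 hw with h | h
        · exact hmemvs w h
        · have hwv : w = v := by simpa using h
          rw [hwv]; exact hv
      have hb := boot (fun ε => itDeriv vs (H ε))
        (fun ε hε => contDiff_itDeriv vs (hsm ε hε)) v hvnorm hmod2 (ih hmemvs)
      intro A hA p
      obtain ⟨C, hC, ε₁, hε₁, hbb⟩ := hb A hA p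
      refine ⟨C, hC, ε₁, hε₁, fun ε hε hle z hz => ?_⟩
      have heq : itDeriv (vs ++ [v]) (H ε) z = dirDeriv v (itDeriv vs (H ε)) z := by
        rw [itDeriv_append]
        rfl
      rw [heq]
      exact hbb ε hε hle z hz
  intro A hA l p
  have hfin := finite_lists (finite_prodDirs m n) l
  have hkey : ∀ vs : List ((Fin m → ℝ) × (Fin n → ℝ)), ∃ C > (0:ℝ), ∃ ε₁ ∈ Ioc (0:ℝ) 1,
      (∀ w ∈ vs, w ∈ prodDirs m n) → ∀ ε ∈ Ioc (0:ℝ) 1, ε ≤ ε₁ → ∀ z ∈ A,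
        ‖itDeriv vs (H ε) z‖ ≤ C * ε ^ p := by
    intro vs
    by_cases h : ∀ w ∈ vs, w ∈ prodDirs m n
    · obtain ⟨C, hC, ε₁, hε₁, hb⟩ := hneg0 vs h A hA p
      exact ⟨C, hC, ε₁, hε₁, fun _ => hb⟩
    · exact ⟨1, one_pos, 1, ⟨one_pos, le_rfl⟩, fun h' => absurd h' h⟩
  choose Cf hCf εf hεf hbf using hkey
  set T := hfin.toFinset with hT
  have hTne : T.Nonempty := ⟨[], by
    rw [hT, Set.Finite.mem_toFinset]
    exact ⟨Nat.zero_le l, by simp⟩⟩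
  obtain ⟨vs₀, hvs₀T, hvs₀eq⟩ := T.exists_mem_eq_inf' hTne εf
  have hCsum : (0:ℝ) ≤ ∑ vs ∈ T, Cf vs := Finset.sum_nonneg fun v _ => (hCf v).le
  refine ⟨(∑ vs ∈ T, Cf vs) + 1, by linarith, T.inf' hTne εf,
    by rw [hvs₀eq]; exact hεf vs₀, ?_⟩
  intro ε hε hle
  have hεnn : (0:ℝ) ≤ ε ^ p := pow_nonneg hε.1.le p
  refine pSemi_le (by nlinarith) ?_
  intro vs hlen hmem z hz
  have hvsT : vs ∈ T := by
    rw [hT, Set.Finite.mem_toFinset]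
    exact ⟨hlen, hmem⟩
  have h1 := hbf vs hmem ε hε (le_trans hle (Finset.inf'_le εf hvsT)) z hz
  refine le_trans h1 (mul_le_mul_of_nonneg_right ?_ hεnn)
  calc Cf vs ≤ ∑ vs ∈ T, Cf vs := Finset.single_le_sum (fun v _ => (hCf v).le) hvsT
    _ ≤ (∑ vs ∈ T, Cf vs) + 1 := by linarith
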